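/- Let σ₃(x) = (max{x,0})³, set nodes t₁ = −2, t₂ = −7/4, t₃ = −3/2, t₄ = −1, t_{9−i} = −t_i for i ∈ {1,2,3,4}, coefficients a₁ = 14/3, a₂ = −32/3, a₃ = 20/3, a₄ = −2/3, a_{9−i} = −a_i for i ∈ {1,2,3,4}, and b = −2, and define φ(x) = b + Σ_{i=1}^8 a_i σ₃(x − t_i). Then φ : ℝ → ℝ is twice continuously differentiable, φ(x) = x for all −1 < x < 1, φ(x) = −2 for all x ≤ −2, and φ(x) = 2 for all x ≥ 2. -/

import Mathlib

open MeasureTheory ProbabilityTheory Filter Real Set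
open scoped ENNReal NNReal BigOperators Topology

noncomputable section

namespace BPINN

/-- Euclidean space `ℝ^d`. -/
abbrev Vec (d : ℕ) := EuclideanSpace ℝ (Fin d)

/-- The ReLU-cube activation `σ₃(x) = (max{x,0})³`. -/
def sigma3 (x : ℝ) : ℝ := (max x 0) ^ 3

/-- Partial derivative `∂ᵢ u (x)`. -/
def pd {d : ℕ} (i : Fin d) (u : Vec d → ℝ) (x : Vec d) : ℝ :=
  fderiv ℝ u x (EuclideanSpace.single i 1)

/-- The elliptic operator `u ↦ −div(A∇u) + V u`. -/
def ellOp {d : ℕ} (A : Vec d → Matrix (Fin d) (Fin d) ℝ) (V : Vec d → ℝ)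
    (u : Vec d → ℝ) (x : Vec d) : ℝ :=
  -(∑ i, pd i (fun y => ∑ j, A y i j * pd j u y) x) + V x * u x

/-- `q` = the greatest integer strictly less than `β` (for `β > 0`). -/
def holderQ (β : ℝ) : ℕ := ⌈β⌉₊ - 1

/-- Hölder norm `‖f‖_{C^β(s)}`, with value in `[0,∞]`. -/
def holderNorm {d : ℕ} (β : ℝ) (s : Set (Vec d)) (f : Vec d → ℝ) : ℝ≥0∞ :=
  (∑ i ∈ Finset.range (holderQ β + 1), ⨆ x ∈ s, (‖iteratedFDeriv ℝ i f x‖₊ : ℝ≥0∞)) +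
    ⨆ x ∈ s, ⨆ y ∈ s, ⨆ _ : x ≠ y,
      (‖iteratedFDeriv ℝ (holderQ β) f x - iteratedFDeriv ℝ (holderQ β) f y‖₊ : ℝ≥0∞) /
        edist x y ^ (β - (holderQ β : ℝ))

/-- Membership in the Hölder class `C^β(s)`. -/
def MemHolder {d : ℕ} (β : ℝ) (s : Set (Vec d)) (f : Vec d → ℝ) : Prop :=
  ContDiff ℝ (holderQ β) f ∧ holderNorm β s f ≠ ∞

/-- `C^k`-norm: sum of the sup-norms of the derivatives of order `≤ k` on `s`. -/
def supDerivNorm {d : ℕ} (k : ℕ) (s : Set (Vec d)) (f : Vec d → ℝ) : ℝ≥0∞ :=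
  ∑ i ∈ Finset.range (k + 1), ⨆ x ∈ s, (‖iteratedFDeriv ℝ i f x‖₊ : ℝ≥0∞)

/-- Smooth boundary, via a level-set description of the domain. -/
def HasSmoothBoundary {d : ℕ} (Ω : Set (Vec d)) : Prop :=
  ∃ F : Vec d → ℝ, ContDiff ℝ (⊤ : ℕ∞) F ∧ Ω = {x | F x < 0} ∧
    ∀ x ∈ frontier Ω, fderiv ℝ F x ≠ 0

/-- Surface measure on `∂Ω`: the `(d−1)`-dimensional Hausdorff measure restricted
to the topological boundary. -/
def surf {d : ℕ} (Ω : Set (Vec d)) : Measure (Vec d) :=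
  (μH[((d : ℝ) - 1)]).restrict (frontier Ω)

/-- Uniform distribution on `Ω`. -/
def unifInt {d : ℕ} (Ω : Set (Vec d)) : Measure (Vec d) :=
  (volume Ω)⁻¹ • volume.restrict Ω

/-- Uniform distribution on `∂Ω` (w.r.t. surface measure). -/
def unifBdry {d : ℕ} (Ω : Set (Vec d)) : Measure (Vec d) :=
  (surf Ω (frontier Ω))⁻¹ • surf Ω

/-- Law of one noisy observation `(Z, h(Z) + ε)` with `Z ∼ μ`, `ε ∼ N(0,1)` independent. -/
def obsLaw {d : ℕ} (μ : Measure (Vec d)) (h : Vec d → ℝ) : Measure (Vec d × ℝ) :=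
  (μ.prod (gaussianReal 0 1)).map fun p => (p.1, h p.1 + p.2)

/-- The sample space for `n₁` interior and `n₂` boundary observations. -/
abbrev Data (d n₁ n₂ : ℕ) := (Fin n₁ → Vec d × ℝ) × (Fin n₂ → Vec d × ℝ)

/-- Joint law of the data `D = {(Xᵢ, fᵢ)} ∪ {(Yⱼ, gⱼ)}`. -/
def dataLaw {d : ℕ} (Ω : Set (Vec d)) (f g : Vec d → ℝ) (n₁ n₂ : ℕ) :
    Measure (Data d n₁ n₂) :=
  (Measure.pi fun _ : Fin n₁ => obsLaw (unifInt Ω) f).prod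
    (Measure.pi fun _ : Fin n₂ => obsLaw (unifBdry Ω) g)

/-- Gaussian log-likelihood of the data under a candidate solution `u`
(up to the additive constant that cancels in the posterior). -/
def loglik {d n₁ n₂ : ℕ} (A : Vec d → Matrix (Fin d) (Fin d) ℝ) (V : Vec d → ℝ)
    (u : Vec d → ℝ) (D : Data d n₁ n₂) : ℝ :=
  -(∑ i, ((D.1 i).2 - ellOp A V u (D.1 i).1) ^ 2) / 2
    - (∑ j, ((D.2 j).2 - u (D.2 j).1) ^ 2) / 2

/-- Posterior mass `Π(E | D)`. -/
def posteriorMass {d n₁ n₂ : ℕ} (Pr : Measure ((Vec d) → ℝ))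
    (A : Vec d → Matrix (Fin d) (Fin d) ℝ) (V : Vec d → ℝ)
    (D : Data d n₁ n₂) (E : Set ((Vec d) → ℝ)) : ℝ :=
  (∫ u in E, Real.exp (loglik A V u D) ∂Pr) / (∫ u, Real.exp (loglik A V u D) ∂Pr)

/-- Posterior mean `ū = E[u | D]` (defined pointwise). -/
def postMean {d n₁ n₂ : ℕ} (Pr : Measure ((Vec d) → ℝ))
    (A : Vec d → Matrix (Fin d) (Fin d) ℝ) (V : Vec d → ℝ)
    (D : Data d n₁ n₂) : Vec d → ℝ :=
  fun x => (∫ u, u x * Real.exp (loglik A V u D) ∂Pr) /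
    (∫ u, Real.exp (loglik A V u D) ∂Pr)

/-- Population PINN-loss
`E(u) = ‖−div(A∇u)+Vu−f‖²_{L²(Ω)} + λ‖u−g‖²_{L²(∂Ω)}`. -/
def pinnLoss {d : ℕ} (Ω : Set (Vec d)) (A : Vec d → Matrix (Fin d) (Fin d) ℝ)
    (V : Vec d → ℝ) (f g : Vec d → ℝ) (lam : ℝ) (u : Vec d → ℝ) : ℝ :=
  (∫ x in Ω, (ellOp A V u x - f x) ^ 2) + lam * ∫ x, (u x - g x) ^ 2 ∂(surf Ω)

/-- Empirical interior residual `(|Ω|/n) Σᵢ (−div(A∇u)(Xᵢ)+V(Xᵢ)u(Xᵢ)−f(Xᵢ))²`. -/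
def empRes1 {d n : ℕ} (A : Vec d → Matrix (Fin d) (Fin d) ℝ) (V : Vec d → ℝ)
    (f : Vec d → ℝ) (volΩ : ℝ) (xs : Fin n → Vec d) (u : Vec d → ℝ) : ℝ :=
  (volΩ / n) * ∑ i, (ellOp A V u (xs i) - f (xs i)) ^ 2

/-- Empirical boundary residual `(|∂Ω|/n) Σⱼ (u(Yⱼ)−g(Yⱼ))²`. -/
def empRes2 {d n : ℕ} (volB : ℝ) (g : Vec d → ℝ) (ys : Fin n → Vec d)
    (u : Vec d → ℝ) : ℝ :=
  (volB / n) * ∑ j, (u (ys j) - g (ys j)) ^ 2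

/-- Empirical PINN-loss `E_n(u; D)`. -/
def empLoss {d n : ℕ} (Ω : Set (Vec d)) (A : Vec d → Matrix (Fin d) (Fin d) ℝ)
    (V : Vec d → ℝ) (f g : Vec d → ℝ) (lam : ℝ) (xs ys : Fin n → Vec d)
    (u : Vec d → ℝ) : ℝ :=
  empRes1 A V f (volume Ω).toReal xs u +
    lam * empRes2 (surf Ω (frontier Ω)).toReal g ys u

/-- Empirical semimetric `‖−div(A∇(u−v)) + V(u−v)‖_{n,1}`. -/
def empDist1 {d n : ℕ} (A : Vec d → Matrix (Fin d) (Fin d) ℝ) (V : Vec d → ℝ)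
    (volΩ : ℝ) (xs : Fin n → Vec d) (u v : Vec d → ℝ) : ℝ :=
  Real.sqrt ((volΩ / n) * ∑ i, (ellOp A V u (xs i) - ellOp A V v (xs i)) ^ 2)

/-- Empirical semimetric `‖u−v‖_{n,2}`. -/
def empDist2 {d n : ℕ} (volB : ℝ) (ys : Fin n → Vec d) (u v : Vec d → ℝ) : ℝ :=
  Real.sqrt ((volB / n) * ∑ j, (u (ys j) - v (ys j)) ^ 2)

/-- The contraction rate `ε_n = n^{−(β−2)/(d+2(β−2))} (log n)^{1/2}`. -/
def rate (d : ℕ) (β : ℝ) (n : ℕ) : ℝ :=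
  (n : ℝ) ^ (-(β - 2) / ((d : ℝ) + 2 * (β - 2))) * Real.sqrt (Real.log n)

/-- The sieve growth exponent `n^{d/(d+2(β−2))}`. -/
def sieveExp (d : ℕ) (β : ℝ) (n : ℕ) : ℝ :=
  (n : ℝ) ^ ((d : ℝ) / ((d : ℝ) + 2 * (β - 2)))

/-! ### σ₃ neural networks -/

/-- Parameters of a depth-`L`, width-`W` network on `ℝ^d`:
input layer, (up to `L`) hidden layers, output layer. -/
abbrev Params (d W L : ℕ) :=
  (Fin W → Fin d → ℝ) × (Fin W → ℝ) × (Fin L → Fin W → Fin W → ℝ) ×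
    (Fin L → Fin W → ℝ) × (Fin W → ℝ) × ℝ

/-- Extend a `Fin L`-indexed family by zero. -/
def pad {L : ℕ} {α : Type*} [Zero α] (f : Fin L → α) (k : ℕ) : α :=
  if h : k < L then f ⟨k, h⟩ else 0

/-- The successive hidden layers of a `σ₃`-network. -/
def hiddenLayers {d W : ℕ} (w1 : Fin W → Fin d → ℝ) (b1 : Fin W → ℝ)
    (wm : ℕ → Fin W → Fin W → ℝ) (bm : ℕ → Fin W → ℝ) (x : Fin d → ℝ) :
    ℕ → Fin W → ℝ
  | 0 => fun i => (∑ j, w1 i j * x j) + b1 i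
  | k + 1 => fun i => (∑ j, wm k i j * sigma3 (hiddenLayers w1 b1 wm bm x k j)) + bm k i

/-- Realization `f_θ` of a depth-`L` `σ₃`-network. -/
def realize {d W L : ℕ} (θ : Params d W L) (x : Vec d) : ℝ :=
  (∑ j, θ.2.2.2.2.1 j *
      sigma3 (hiddenLayers θ.1 θ.2.1 (pad θ.2.2.1) (pad θ.2.2.2.1) (fun i => x i) (L - 2) j))
    + θ.2.2.2.2.2

/-- All parameter entries bounded by `B` in absolute value. -/
def paramBound {d W L : ℕ} (B : ℝ) (θ : Params d W L) : Prop :=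
  (∀ i j, |θ.1 i j| ≤ B) ∧ (∀ i, |θ.2.1 i| ≤ B) ∧
    (∀ k i j, |θ.2.2.1 k i j| ≤ B) ∧ (∀ k i, |θ.2.2.2.1 k i| ≤ B) ∧
    (∀ j, |θ.2.2.2.2.1 j| ≤ B) ∧ |θ.2.2.2.2.2| ≤ B

/-- Number of nonzero parameters (the sparsity). -/
def sparsity {d W L : ℕ} (θ : Params d W L) : ℕ :=
  {p : Fin W × Fin d | θ.1 p.1 p.2 ≠ 0}.ncard +
    {i : Fin W | θ.2.1 i ≠ 0}.ncard +
    {p : Fin L × Fin W × Fin W | θ.2.2.1 p.1 p.2.1 p.2.2 ≠ 0}.ncard +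
    {p : Fin L × Fin W | θ.2.2.2.1 p.1 p.2 ≠ 0}.ncard +
    {j : Fin W | θ.2.2.2.2.1 j ≠ 0}.ncard +
    {_u : Unit | θ.2.2.2.2.2 ≠ 0}.ncard

/-! ### The C² cutoff implemented by one σ₃-layer -/

def cutNodes : Fin 8 → ℝ := ![-2, -7/4, -3/2, -1, 1, 3/2, 7/4, 2]

def cutCoefs : Fin 8 → ℝ := ![14/3, -32/3, 20/3, -2/3, 2/3, -20/3, 32/3, -14/3]

/-- The explicit `C²` cutoff `φ(x) = −2 + Σᵢ aᵢ σ₃(x − tᵢ)`. -/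
def cutoffPhi (x : ℝ) : ℝ := -2 + ∑ i, cutCoefs i * sigma3 (x - cutNodes i)

/-- The `F`-level clip `clip_F(x) = F φ(x/F)`. -/
def clipF (F x : ℝ) : ℝ := F * cutoffPhi (x / F)

/-! ### DNN function classes -/

/-- `F(L,W,S,B)`: clipped realizations of depth-`L` width-`W` networks with
sparsity `≤ S` and parameters bounded by `B`; `R` is the clip level. -/
def dnnClass (d L W S : ℕ) (B R : ℝ) : Set (Vec d → ℝ) :=
  {u | ∃ θ : Params d W L, paramBound B θ ∧ sparsity θ ≤ S ∧
      u = fun x => clipF R (realize θ x)}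

/-- The full DNN class `F = ∪_W ∪_S ∪_B F(L,W,S,B)`. -/
def dnnFull (d L : ℕ) (R : ℝ) : Set (Vec d → ℝ) :=
  ⋃ (W : ℕ) (_ : 1 ≤ W) (S : ℕ) (_ : 1 ≤ S) (B : ℝ) (_ : 0 < B), dnnClass d L W S B R

/-- The sieve `F_n = ∪_{W≤Wn} ∪_{S≤Sn} ∪_{B≤Bn} F(L,W,S,B)`. -/
def sieve (d L : ℕ) (Wn Sn : ℕ) (Bn R : ℝ) : Set (Vec d → ℝ) :=
  ⋃ (W : ℕ) (_ : 1 ≤ W ∧ W ≤ Wn) (S : ℕ) (_ : 1 ≤ S ∧ S ≤ Sn)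
    (B : ℝ) (_ : 0 < B ∧ B ≤ Bn), dnnClass d L W S B R

/-! ### The spike-and-slab prior -/

/-- Zero-truncated Poisson weight `λ^w / ((e^λ − 1) w!)` of the width. -/
def priorWeight (lamW : ℝ) (w : ℕ) : ℝ≥0∞ :=
  ENNReal.ofReal (lamW ^ w / ((Real.exp lamW - 1) * (Nat.factorial w)))

/-- Spike-and-slab law of one coordinate: point mass at `0` with probability
`1−p₀`, uniform on `[−b,b]` with probability `p₀`. -/
def coordLaw (p0 b : ℝ) : Measure ℝ :=
  ENNReal.ofReal (1 - p0) • Measure.dirac 0 +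
    (ENNReal.ofReal p0 / ENNReal.ofReal (2 * b)) • volume.restrict (Set.Icc (-b) b)

/-- Total number of parameters of a depth-`L` width-`W` network. -/
def totalParams (d W L : ℕ) : ℕ := W * d + W + L * (W * W + W) + W + 1

/-- Activation probability `(1 + T^{λ_S})⁻¹` of each coordinate. -/
def spikeP0 (lamS : ℝ) (T : ℕ) : ℝ := (1 + (T : ℝ) ^ lamS)⁻¹

/-- Exponential distribution with rate `λ`. -/
def expMeasure (lam : ℝ) : Measure ℝ :=
  volume.withDensity fun b =>
    ENNReal.ofReal (if 0 ≤ b then lam * Real.exp (-(lam * b)) else 0)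

/-- Conditional law of all parameters given amplitude `b` and activation prob `p₀`. -/
def paramLaw (d W L : ℕ) (p0 b : ℝ) : Measure (Params d W L) :=
  (Measure.pi fun _ : Fin W => Measure.pi fun _ : Fin d => coordLaw p0 b).prod
    ((Measure.pi fun _ : Fin W => coordLaw p0 b).prod
      ((Measure.pi fun _ : Fin L => Measure.pi fun _ : Fin W =>
          Measure.pi fun _ : Fin W => coordLaw p0 b).prod
        ((Measure.pi fun _ : Fin L => Measure.pi fun _ : Fin W => coordLaw p0 b).prod
          ((Measure.pi fun _ : Fin W => coordLaw p0 b).prod (coordLaw p0 b)))))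

/-- The hierarchical spike-and-slab prior on the DNN function class:
truncated-Poisson width, Bernoulli architecture (through the spike-and-slab
coordinates), exponential amplitude, uniform slab, composed with the clip. -/
def spikeSlabPrior (d L : ℕ) (lamW lamS lamB R : ℝ) : Measure ((Vec d) → ℝ) :=
  Measure.sum fun w : ℕ =>
    priorWeight lamW (w + 1) •
      (((expMeasure lamB).bind fun b =>
          paramLaw d (w + 1) L (spikeP0 lamS (totalParams d (w + 1) L)) b).map
        fun θ => fun x => clipF R (realize θ x))

/-! ### Rademacher complexity and Sobolev quantities -/

def boolSign (b : Bool) : ℝ := if b then 1 else -1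

/-- The sampling-and-signs measure for Rademacher complexities. -/
def radMeasure {α : Type*} [MeasurableSpace α] (μ : Measure α) (n : ℕ) :
    Measure ((Fin n → α) × (Fin n → Bool)) :=
  (Measure.pi fun _ : Fin n => μ).prod
    (Measure.pi fun _ : Fin n => (PMF.uniformOfFintype Bool).toMeasure)

/-- Rademacher complexity `R_n(G) = E sup_{g∈G} |n⁻¹ Σ τᵢ g(Zᵢ)|`. -/
def radComplexity {α : Type*} [MeasurableSpace α] (μ : Measure α) (n : ℕ)
    (G : Set (α → ℝ)) : ℝ :=
  ∫ p, sSup ((fun g : α → ℝ => |(∑ i, boolSign (p.2 i) * g (p.1 i)) / n|) '' G)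
    ∂(radMeasure μ n)

/-- Squared `H²(s)`-norm. -/
def h2NormSq {d : ℕ} (s : Set (Vec d)) (u : Vec d → ℝ) : ℝ :=
  ∑ k ∈ Finset.range 3, ∫ x in s, ‖iteratedFDeriv ℝ k u x‖ ^ 2

/-- Kullback–Leibler divergence `∫ log (dμ/dν) dμ`. -/
def klDiv {α : Type*} [MeasurableSpace α] (μ ν : Measure α) : ℝ :=
  ∫ x, Real.log (μ.rnDeriv ν x).toReal ∂μ

/-! ### Standing assumptions -/

/-- Assumptions on the domain. -/
def DomainAssumptions {d : ℕ} (Ω : Set (Vec d)) : Prop :=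
  IsOpen Ω ∧ Bornology.IsBounded Ω ∧ Ω.Nonempty ∧ HasSmoothBoundary Ω

/-- Assumptions on the coefficients: smoothness, uniform ellipticity
`r_min I ⪯ A`, bounds `‖A‖_∞ ∨ ‖∇A‖_∞ ≤ C_A` and `0 < V_min ≤ V ≤ V_max`. -/
def CoeffAssumptions {d : ℕ} (Ω : Set (Vec d)) (A : Vec d → Matrix (Fin d) (Fin d) ℝ)
    (V : Vec d → ℝ) (rmin CA Vmin Vmax : ℝ) : Prop :=
  (∀ i j, ContDiff ℝ (⊤ : ℕ∞) fun x => A x i j) ∧ ContDiff ℝ (⊤ : ℕ∞) V ∧ 0 < rmin ∧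
    (∀ x ∈ closure Ω, ∀ v : Fin d → ℝ,
      rmin * ∑ i, v i ^ 2 ≤ ∑ i, ∑ j, v i * A x i j * v j) ∧
    (∀ x ∈ closure Ω, ∀ i j, |A x i j| ≤ CA) ∧
    (∀ x ∈ closure Ω, ∀ i, |∑ j, pd j (fun y => A y j i) x| ≤ CA) ∧
    0 < Vmin ∧ (∀ x ∈ closure Ω, Vmin ≤ V x ∧ V x ≤ Vmax)

/-- `u*` is a strong solution of `−div(A∇u*) + V u* = f` in `Ω`, `u* = g` on `∂Ω`. -/
def SolvesPDE {d : ℕ} (Ω : Set (Vec d)) (A : Vec d → Matrix (Fin d) (Fin d) ℝ)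
    (V : Vec d → ℝ) (uStar f g : Vec d → ℝ) : Prop :=
  (∀ x ∈ Ω, ellOp A V uStar x = f x) ∧ ∀ x ∈ frontier Ω, uStar x = g x


/-! ### Prior tail quantities (for the sieve-mass bound) -/

/-- `Π_θ(W > Wn)`: the truncated-Poisson width tail. -/
def poissonTail (lamW : ℝ) (Wn : ℕ) : ℝ :=
  ∑' w : ℕ, if Wn < w + 1 then (priorWeight lamW (w + 1)).toReal else 0

/-- `Π_θ(S > Sn | W = w)`: binomial sparsity tail. -/
def binomTail (d L : ℕ) (lamS : ℝ) (w Sn : ℕ) : ℝ :=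
  ∑ s ∈ Finset.Icc (Sn + 1) (totalParams d w L),
    (Nat.choose (totalParams d w L) s : ℝ) * (spikeP0 lamS (totalParams d w L)) ^ s *
      (1 - spikeP0 lamS (totalParams d w L)) ^ (totalParams d w L - s)

/-- `Π_θ(W ≤ Wn, S > Sn)`. -/
def widthSparsityTail (d L : ℕ) (lamW lamS : ℝ) (Wn Sn : ℕ) : ℝ :=
  ∑ w ∈ Finset.Icc 1 Wn, (priorWeight lamW w).toReal * binomTail d L lamS w Sn

/-- `Π_θ(B > Bn) = e^{−λ_B B_n}` for the exponential amplitude. -/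
def expTail (lamB Bn : ℝ) : ℝ := Real.exp (-(lamB * Bn))


lemma hasDerivAt_reluPow {n : ℕ} (hn : 2 ≤ n) (x : ℝ) :
    HasDerivAt (fun y : ℝ => (max y 0) ^ n) (n * (max x 0) ^ (n - 1)) x := by
  rcases lt_trichotomy x 0 with h | h | h
  · have hev : (fun y : ℝ => (max y 0) ^ n) =ᶠ[𝓝 x] fun _ => (0 : ℝ) := by
      filter_upwards [Iio_mem_nhds h] with y hy
      simp [max_eq_right (le_of_lt (Set.mem_Iio.mp hy)), zero_pow (by omega : n ≠ 0)]
    have := (hasDerivAt_const x (0 : ℝ)).congr_of_eventuallyEq hev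
    simpa [max_eq_right h.le, zero_pow (by omega : n - 1 ≠ 0)] using this
  · subst h
    rw [hasDerivAt_iff_tendsto_slope]
    have hb : ∀ᶠ y in 𝓝[≠] (0:ℝ), ‖slope (fun y : ℝ => (max y 0) ^ n) 0 y‖ ≤ |y| := by
      filter_upwards [self_mem_nhdsWithin,
        nhdsWithin_le_nhds (Ioo_mem_nhds (by norm_num : (-1:ℝ) < 0) (by norm_num : (0:ℝ) < 1))]
        with y hy hy1
      have hy0 : y ≠ 0 := hy
      have h1 : |y| ≤ 1 := by
        rw [abs_le]; constructor <;> [exact hy1.1.le; exact hy1.2.le]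
      have hmax : |max y 0| ≤ |y| := by
        rcases le_or_gt y 0 with h' | h'
        · simp [max_eq_right h']
        · simp [max_eq_left h'.le]
      calc ‖slope (fun y : ℝ => (max y 0) ^ n) 0 y‖
          = |max y 0| ^ n / |y| := by
            simp [slope_def_field, abs_div, abs_pow, zero_pow (by omega : n ≠ 0)]
        _ ≤ |y| ^ n / |y| := by
            gcongr
        _ = |y| ^ (n - 1) := by
            rw [div_eq_iff (abs_ne_zero.mpr hy0), ← pow_succ]
            congr 1; omega
        _ ≤ |y| ^ 1 := by
            apply pow_le_pow_of_le_one (abs_nonneg y) h1; omega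
        _ = |y| := pow_one _
    have habs : Tendsto (fun y : ℝ => |y|) (𝓝[≠] (0:ℝ)) (𝓝 0) := by
      have : Tendsto (fun y : ℝ => |y|) (𝓝 (0:ℝ)) (𝓝 |0|) :=
        (continuous_abs).tendsto 0
      simpa using this.mono_left nhdsWithin_le_nhds
    have := squeeze_zero_norm' hb habs
    simpa [max_eq_right (le_refl (0:ℝ)), zero_pow (by omega : n - 1 ≠ 0)] using this
  · have hev : (fun y : ℝ => (max y 0) ^ n) =ᶠ[𝓝 x] fun y => y ^ n := by
      filter_upwards [Ioi_mem_nhds h] with y hy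
      simp [max_eq_left (le_of_lt (Set.mem_Ioi.mp hy))]
    have := (hasDerivAt_pow n x).congr_of_eventuallyEq hev
    simpa [max_eq_left h.le] using this

lemma contDiff_two_sigma3 : ContDiff ℝ 2 sigma3 := by
  have hd3 : ∀ x : ℝ, HasDerivAt sigma3 (3 * (max x 0) ^ 2) x := by
    intro x; exact (by simpa using hasDerivAt_reluPow (n := 3) (by norm_num) x :
      HasDerivAt (fun y : ℝ => (max y 0) ^ 3) (3 * (max x 0) ^ 2) x)
  have hd2 : ∀ x : ℝ, HasDerivAt (fun y : ℝ => 3 * (max y 0) ^ 2) (3 * (2 * max x 0)) x := by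
    intro x
    have := (hasDerivAt_reluPow (le_refl 2) x).const_mul (3 : ℝ)
    simpa using this
  have e1 : deriv sigma3 = fun x => 3 * (max x 0) ^ 2 := funext fun x => (hd3 x).deriv
  rw [show (2 : WithTop ℕ∞) = 1 + 1 from rfl, contDiff_succ_iff_deriv]
  refine ⟨fun x => (hd3 x).differentiableAt, by simp, ?_⟩
  rw [e1, contDiff_one_iff_deriv]
  refine ⟨fun x => (hd2 x).differentiableAt, ?_⟩
  have e2 : deriv (fun y : ℝ => 3 * (max y 0) ^ 2) = fun x => 3 * (2 * max x 0) :=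
    funext fun x => (hd2 x).deriv
  rw [e2]
  exact continuous_const.mul (continuous_const.mul (continuous_id.max continuous_const))

lemma sigma3_of_nonneg {x : ℝ} (hx : 0 ≤ x) : sigma3 x = x ^ 3 := by
  simp [sigma3, max_eq_left hx]

lemma sigma3_of_nonpos {x : ℝ} (hx : x ≤ 0) : sigma3 x = 0 := by
  simp [sigma3, max_eq_right hx]

/-- The explicit one-layer `σ₃` cutoff `φ` is `C²`, equals the
identity on `(−1,1)`, equals `−2` on `(−∞,−2]` and equals `2` on `[2,∞)`. -/
theorem cutoffPhi_properties :
    ContDiff ℝ 2 cutoffPhi ∧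
      (∀ x : ℝ, -1 < x → x < 1 → cutoffPhi x = x) ∧
      (∀ x : ℝ, x ≤ -2 → cutoffPhi x = -2) ∧
      (∀ x : ℝ, 2 ≤ x → cutoffPhi x = 2) := by
  have hnodes : ∀ i : Fin 8, cutNodes i = ![-2, -7/4, -3/2, -1, 1, 3/2, 7/4, 2] i :=
    fun i => rfl
  refine ⟨?_, ?_, ?_, ?_⟩
  · unfold cutoffPhi
    refine contDiff_const.add (ContDiff.sum fun i _ => contDiff_const.mul ?_)
    exact contDiff_two_sigma3.comp (contDiff_id.sub contDiff_const)
  · intro x h1 h2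
    rw [cutoffPhi, Fin.sum_univ_eight,
      sigma3_of_nonneg (show (0:ℝ) ≤ x - cutNodes 0 by rw [show cutNodes 0 = -2 from rfl]; linarith),
      sigma3_of_nonneg (show (0:ℝ) ≤ x - cutNodes 1 by rw [show cutNodes 1 = -7/4 from rfl]; linarith),
      sigma3_of_nonneg (show (0:ℝ) ≤ x - cutNodes 2 by rw [show cutNodes 2 = -3/2 from rfl]; linarith),
      sigma3_of_nonneg (show (0:ℝ) ≤ x - cutNodes 3 by rw [show cutNodes 3 = -1 from rfl]; linarith),
      sigma3_of_nonpos (show x - cutNodes 4 ≤ 0 by rw [show cutNodes 4 = 1 from rfl]; linarith),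
      sigma3_of_nonpos (show x - cutNodes 5 ≤ 0 by rw [show cutNodes 5 = 3/2 from rfl]; linarith),
      sigma3_of_nonpos (show x - cutNodes 6 ≤ 0 by rw [show cutNodes 6 = 7/4 from rfl]; linarith),
      sigma3_of_nonpos (show x - cutNodes 7 ≤ 0 by rw [show cutNodes 7 = 2 from rfl]; linarith)]
    simp only [show cutCoefs 0 = 14/3 from rfl, show cutCoefs 1 = -32/3 from rfl,
      show cutCoefs 2 = 20/3 from rfl, show cutCoefs 3 = -2/3 from rfl,
      show cutCoefs 4 = 2/3 from rfl, show cutCoefs 5 = -20/3 from rfl,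
      show cutCoefs 6 = 32/3 from rfl, show cutCoefs 7 = -14/3 from rfl,
      show cutNodes 0 = -2 from rfl, show cutNodes 1 = -7/4 from rfl,
      show cutNodes 2 = -3/2 from rfl, show cutNodes 3 = -1 from rfl,
      show cutNodes 4 = 1 from rfl, show cutNodes 5 = 3/2 from rfl,
      show cutNodes 6 = 7/4 from rfl, show cutNodes 7 = 2 from rfl]
    ring
  · intro x h1
    rw [cutoffPhi, Fin.sum_univ_eight,
      sigma3_of_nonpos (show x - cutNodes 0 ≤ 0 by rw [show cutNodes 0 = -2 from rfl]; linarith),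
      sigma3_of_nonpos (show x - cutNodes 1 ≤ 0 by rw [show cutNodes 1 = -7/4 from rfl]; linarith),
      sigma3_of_nonpos (show x - cutNodes 2 ≤ 0 by rw [show cutNodes 2 = -3/2 from rfl]; linarith),
      sigma3_of_nonpos (show x - cutNodes 3 ≤ 0 by rw [show cutNodes 3 = -1 from rfl]; linarith),
      sigma3_of_nonpos (show x - cutNodes 4 ≤ 0 by rw [show cutNodes 4 = 1 from rfl]; linarith),
      sigma3_of_nonpos (show x - cutNodes 5 ≤ 0 by rw [show cutNodes 5 = 3/2 from rfl]; linarith),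
      sigma3_of_nonpos (show x - cutNodes 6 ≤ 0 by rw [show cutNodes 6 = 7/4 from rfl]; linarith),
      sigma3_of_nonpos (show x - cutNodes 7 ≤ 0 by rw [show cutNodes 7 = 2 from rfl]; linarith)]
    simp
  · intro x h1
    rw [cutoffPhi, Fin.sum_univ_eight,
      sigma3_of_nonneg (show (0:ℝ) ≤ x - cutNodes 0 by rw [show cutNodes 0 = -2 from rfl]; linarith),
      sigma3_of_nonneg (show (0:ℝ) ≤ x - cutNodes 1 by rw [show cutNodes 1 = -7/4 from rfl]; linarith),
      sigma3_of_nonneg (show (0:ℝ) ≤ x - cutNodes 2 by rw [show cutNodes 2 = -3/2 from rfl]; linarith),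
      sigma3_of_nonneg (show (0:ℝ) ≤ x - cutNodes 3 by rw [show cutNodes 3 = -1 from rfl]; linarith),
      sigma3_of_nonneg (show (0:ℝ) ≤ x - cutNodes 4 by rw [show cutNodes 4 = 1 from rfl]; linarith),
      sigma3_of_nonneg (show (0:ℝ) ≤ x - cutNodes 5 by rw [show cutNodes 5 = 3/2 from rfl]; linarith),
      sigma3_of_nonneg (show (0:ℝ) ≤ x - cutNodes 6 by rw [show cutNodes 6 = 7/4 from rfl]; linarith),
      sigma3_of_nonneg (show (0:ℝ) ≤ x - cutNodes 7 by rw [show cutNodes 7 = 2 from rfl]; linarith)]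
    simp only [show cutCoefs 0 = 14/3 from rfl, show cutCoefs 1 = -32/3 from rfl,
      show cutCoefs 2 = 20/3 from rfl, show cutCoefs 3 = -2/3 from rfl,
      show cutCoefs 4 = 2/3 from rfl, show cutCoefs 5 = -20/3 from rfl,
      show cutCoefs 6 = 32/3 from rfl, show cutCoefs 7 = -14/3 from rfl,
      show cutNodes 0 = -2 from rfl, show cutNodes 1 = -7/4 from rfl,
      show cutNodes 2 = -3/2 from rfl, show cutNodes 3 = -1 from rfl,
      show cutNodes 4 = 1 from rfl, show cutNodes 5 = 3/2 from rfl,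
      show cutNodes 6 = 7/4 from rfl, show cutNodes 7 = 2 from rfl]
    ring


end BPINN
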